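/- The image of the closed ball B_r under the momentum map μ equals the simplex {x ∈ ℝⁿ : xₖ ≥ 0 for every k and ∑ₖ xₖ ≤ r²}, and this simplex equals the convex hull in ℝⁿ of the n+1 points 0, r²e₁, …, r²eₙ, where e₁, …, eₙ is the standard basis of ℝⁿ. -/

import Mathlib

/-! Since `∑ₖ |zₖ|² = ‖z‖²`, the momentum map sends the ball of radius `r` into the
simplex, and `z = (√xₖ)ₖ` is a preimage in the ball of any point `x` of the simplex.
The simplex is convex and contains the vertices, and each of its points `x` is the convex
combination `∑ₖ (xₖ / r²) • (r² eₖ) + (1 - ∑ₖ xₖ / r²) • 0` of them. -/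

open scoped BigOperators

/-- The momentum map of the ball: `μ(z)ₖ = |zₖ|²`. -/
noncomputable def ballMomentMap (n : ℕ) (z : EuclideanSpace ℂ (Fin n)) :
    EuclideanSpace ℝ (Fin n) :=
  WithLp.toLp 2 (fun k => ‖z k‖ ^ 2)

open Set

def cornerSimplex (ι : Type*) [Fintype ι] (c : ℝ) : Set (EuclideanSpace ℝ ι) :=
  {x | (∀ k, 0 ≤ x k) ∧ ∑ k, x k ≤ c}

section cornerSimplex

variable {ι : Type*} [Fintype ι] {c : ℝ}

theorem convex_cornerSimplex : Convex ℝ (cornerSimplex ι c) := by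
  rintro x ⟨hx, hxc⟩ y ⟨hy, hyc⟩ s t hs ht hst
  refine ⟨fun k => ?_, ?_⟩
  · simpa using add_nonneg (mul_nonneg hs (hx k)) (mul_nonneg ht (hy k))
  · calc ∑ k, (s • x + t • y) k = s * ∑ k, x k + t * ∑ k, y k := by
          simp [Finset.sum_add_distrib, Finset.mul_sum]
      _ ≤ s * c + t * c := by gcongr
      _ = c := by rw [← add_mul, hst, one_mul]

theorem zero_mem_cornerSimplex (hc : 0 ≤ c) :
    (0 : EuclideanSpace ℝ ι) ∈ cornerSimplex ι c :=
  ⟨fun _ => le_rfl, by simpa using hc⟩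

variable [DecidableEq ι]

theorem smul_single_mem_cornerSimplex (hc : 0 ≤ c) (i : ι) :
    c • EuclideanSpace.single i (1 : ℝ) ∈ cornerSimplex ι c := by
  refine ⟨fun k => ?_, ?_⟩
  · simp only [PiLp.smul_apply, PiLp.single_apply, smul_eq_mul]
    positivity
  · simp [PiLp.single_apply]

theorem cornerSimplex_subset_convexHull (hc : 0 < c) :
    cornerSimplex ι c ⊆
      convexHull ℝ ({0} ∪ range fun i => c • EuclideanSpace.single i (1 : ℝ)) := by
  rintro x ⟨hx, hxc⟩
  let p : Option ι → EuclideanSpace ℝ ι :=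
    fun j => j.elim 0 fun i => c • EuclideanSpace.single i 1
  let w : Option ι → ℝ := fun j => j.elim (1 - (∑ k, x k) / c) fun i => x i / c
  have hw : ∀ j, 0 ≤ w j := by
    rintro (_ | i)
    · simpa [w, div_le_one hc] using hxc
    · exact div_nonneg (hx i) hc.le
  have hw_sum : ∑ j, w j = 1 := by
    simp [w, Fintype.sum_option, ← Finset.sum_div]
  have hx_eq : ∑ j, w j • p j = x := by
    ext k
    simp [w, p, Fintype.sum_option, Pi.single_apply, hc.ne']
  rw [← hx_eq]
  refine (convex_convexHull ℝ _).sum_mem (fun j _ => hw j) hw_sum ?_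
  rintro (_ | i) _
  · exact subset_convexHull ℝ _ (Or.inl rfl)
  · exact subset_convexHull ℝ _ (Or.inr ⟨i, rfl⟩)

theorem convexHull_zero_union_smul_single_eq_cornerSimplex (hc : 0 < c) :
    convexHull ℝ ({0} ∪ range fun i => c • EuclideanSpace.single i (1 : ℝ)) =
      cornerSimplex ι c := by
  refine (convexHull_min ?_ convex_cornerSimplex).antisymm (cornerSimplex_subset_convexHull hc)
  rintro _ (rfl | ⟨i, rfl⟩)
  exacts [zero_mem_cornerSimplex hc.le, smul_single_mem_cornerSimplex hc.le i]

end cornerSimplex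

theorem sum_ballMomentMap (n : ℕ) (z : EuclideanSpace ℂ (Fin n)) :
    ∑ k, ballMomentMap n z k = ‖z‖ ^ 2 := by
  simp [ballMomentMap, EuclideanSpace.norm_sq_eq]

theorem ballMomentMap_toLp_sqrt {n : ℕ} {x : EuclideanSpace ℝ (Fin n)} (hx : ∀ k, 0 ≤ x k) :
    ballMomentMap n (WithLp.toLp 2 fun k => (√(x k) : ℂ)) = x := by
  ext k
  simp [ballMomentMap, Real.sq_sqrt (hx k)]

theorem ballMomentMap_image_closedBall {n : ℕ} {r : ℝ} (hr : 0 ≤ r) :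
    ballMomentMap n '' Metric.closedBall 0 r = cornerSimplex (Fin n) (r ^ 2) := by
  ext x
  constructor
  · rintro ⟨z, hz, rfl⟩
    refine ⟨fun k => sq_nonneg _, ?_⟩
    rw [sum_ballMomentMap]
    exact pow_le_pow_left₀ (norm_nonneg z) (mem_closedBall_zero_iff.mp hz) 2
  · rintro ⟨hx, hxr⟩
    refine ⟨_, ?_, ballMomentMap_toLp_sqrt hx⟩
    rw [mem_closedBall_zero_iff, ← pow_le_pow_iff_left₀ (norm_nonneg _) hr two_ne_zero,
      ← sum_ballMomentMap, ballMomentMap_toLp_sqrt hx]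
    exact hxr

theorem moment_image_closedBall_eq_simplex_general (n : ℕ) (r : ℝ) (hr : 0 < r) :
    ballMomentMap n '' Metric.closedBall 0 r
      = {x : EuclideanSpace ℝ (Fin n) | (∀ k, 0 ≤ x k) ∧ ∑ k, x k ≤ r ^ 2} ∧
    {x : EuclideanSpace ℝ (Fin n) | (∀ k, 0 ≤ x k) ∧ ∑ k, x k ≤ r ^ 2}
      = convexHull ℝ
          ({0} ∪ Set.range (fun i : Fin n => r ^ 2 • EuclideanSpace.single i (1 : ℝ))) :=
  ⟨ballMomentMap_image_closedBall hr.le,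
    (convexHull_zero_union_smul_single_eq_cornerSimplex (pow_pos hr 2)).symm⟩

theorem moment_image_closedBall_eq_simplex (n : ℕ) (hn : 1 ≤ n) (r : ℝ) (hr : 0 < r) :
    ballMomentMap n '' Metric.closedBall 0 r
      = {x : EuclideanSpace ℝ (Fin n) | (∀ k, 0 ≤ x k) ∧ ∑ k, x k ≤ r ^ 2} ∧
    {x : EuclideanSpace ℝ (Fin n) | (∀ k, 0 ≤ x k) ∧ ∑ k, x k ≤ r ^ 2}
      = convexHull ℝ
          ({0} ∪ Set.range (fun i : Fin n => r ^ 2 • EuclideanSpace.single i (1 : ℝ))) :=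
  moment_image_closedBall_eq_simplex_general n r hr
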